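/- (Lemma 2.3) The function d : ℝ → ℝ is continuous, satisfies 0 < d(x) ≤ 1 for all x ∈ ℝ, and for every ε ∈ [0,1], every x ∈ ℝ, and every t ∈ [x − ε·d(x), x + ε·d(x)], one has (1 − ε)·d(x) ≤ d(t) ≤ (1 + ε)·d(x). -/
import Mathlib

open MeasureTheory Filter Real Set
open scoped ENNReal

noncomputable section

/-- Condition (1.5): for every `a > 0`, `∫_{x-a}^{x+a} q(t) dt → ∞` as `|x| → ∞`. -/
def Cond15 (q : ℝ → ℝ) : Prop :=
  ∀ a : ℝ, 0 < a → Tendsto (fun x => ∫ t in (x - a)..(x + a), q t) (cocompact ℝ) atTop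

/-- `(u, v)` is a principal fundamental system of solutions (PFSS) of `z'' = q z`.
Local absolute continuity of `u'` together with `u'' = q u` a.e. is encoded via the
fundamental theorem of calculus: `u' b - u' a = ∫_a^b q t * u t dt` for all `a, b`. -/
def IsPFSS (q u v : ℝ → ℝ) : Prop :=
  ContDiff ℝ 1 u ∧ ContDiff ℝ 1 v ∧
  (∀ a b : ℝ, deriv u b - deriv u a = ∫ t in a..b, q t * u t) ∧
  (∀ a b : ℝ, deriv v b - deriv v a = ∫ t in a..b, q t * v t) ∧
  (∀ x, 0 < u x) ∧ (∀ x, 0 < v x) ∧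
  (∀ x, deriv u x < 0) ∧ (∀ x, 0 < deriv v x) ∧
  (∀ x, deriv v x * u x - deriv u x * v x = 1) ∧
  (∀ x, u x = v x * ∫ t in Set.Ioi x, ((v t) ^ 2)⁻¹) ∧
  Tendsto u atTop (nhds 0) ∧ Tendsto (deriv u) atTop (nhds 0) ∧
  Tendsto v atTop atTop ∧ Tendsto (deriv v) atTop atTop ∧
  Tendsto v atBot (nhds 0) ∧ Tendsto (deriv v) atBot (nhds 0) ∧
  Tendsto u atBot atTop ∧ Tendsto (fun x => |deriv u x|) atBot atTop

/-- The Green function: `G(x,t) = u(x) v(t)` for `x ≥ t`, `G(x,t) = u(t) v(x)` for `x ≤ t`. -/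
def GreenFn (u v : ℝ → ℝ) (x t : ℝ) : ℝ := if x ≤ t then u t * v x else u x * v t

/-- The Green operator `(Gf)(x) = ∫_ℝ G(x,t) f(t) dt`. -/
def GreenOp (u v f : ℝ → ℝ) (x : ℝ) : ℝ := ∫ t, GreenFn u v x t * f t
/-- Lemma 2.3: the Otelbaev function `d` is continuous, `0 < d(x) ≤ 1`, and for
`ε ∈ [0,1]` and `t ∈ [x - ε d(x), x + ε d(x)]` one has `(1-ε) d(x) ≤ d(t) ≤ (1+ε) d(x)`. -/
theorem lemma_2_3 (q : ℝ → ℝ) (hq_loc : LocallyIntegrable q) (hq : ∀ x, 1 ≤ q x)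
    (d : ℝ → ℝ)
    (hd : ∀ x, 0 < d x ∧ (2 : ℝ) = d x * ∫ t in (x - d x)..(x + d x), q t) :
    Continuous d ∧ (∀ x, 0 < d x ∧ d x ≤ 1) ∧
    (∀ ε : ℝ, ε ∈ Set.Icc (0 : ℝ) 1 → ∀ x : ℝ,
      ∀ t ∈ Set.Icc (x - ε * d x) (x + ε * d x),
        (1 - ε) * d x ≤ d t ∧ d t ≤ (1 + ε) * d x) := by
  -- interval integrability of q
  have hInt : ∀ a b : ℝ, IntervalIntegrable q volume a b := by
    intro a b
    exact intervalIntegrable_iff.2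
      ((hq_loc.integrableOn_isCompact isCompact_uIcc).mono_set Set.uIoc_subset_uIcc)
  -- lower bound on integrals
  have hlow : ∀ a b : ℝ, a ≤ b → b - a ≤ ∫ t in a..b, q t := by
    intro a b hab
    have h := intervalIntegral.integral_mono_on hab (intervalIntegrable_const (c := (1:ℝ)))
      (hInt a b) (fun x _ => hq x)
    simpa using h
  have hqpos : 0 ≤ᵐ[volume.restrict (Set.Ioc (0:ℝ) 0)] q := by
    exact Filter.Eventually.of_forall fun x => le_trans zero_le_one (hq x)
  -- monotonicity of subinterval integrals
  have hsub : ∀ a b c e : ℝ, a ≤ c → c ≤ e → e ≤ b →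
      (∫ t in c..e, q t) ≤ ∫ t in a..b, q t := by
    intro a b c e hac hce heb
    exact intervalIntegral.integral_mono_interval hac hce heb
      (Filter.Eventually.of_forall fun x => le_trans zero_le_one (hq x)) (hInt a b)
  -- strict monotonicity of F(t, δ) = δ ∫_{t-δ}^{t+δ} q
  have hmono : ∀ t a b : ℝ, 0 ≤ a → a < b →
      a * (∫ s in (t - a)..(t + a), q s) < b * (∫ s in (t - b)..(t + b), q s) := by
    intro t a b ha hab
    have hb : 0 < b := lt_of_le_of_lt ha hab
    have hIb : 2 * b ≤ ∫ s in (t - b)..(t + b), q s := by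
      have := hlow (t - b) (t + b) (by linarith)
      linarith
    have hIab : (∫ s in (t - a)..(t + a), q s) ≤ ∫ s in (t - b)..(t + b), q s :=
      hsub _ _ _ _ (by linarith) (by linarith) (by linarith)
    calc a * (∫ s in (t - a)..(t + a), q s)
        ≤ a * (∫ s in (t - b)..(t + b), q s) := by
          exact mul_le_mul_of_nonneg_left hIab ha
      _ < b * (∫ s in (t - b)..(t + b), q s) := by
          have : 0 < ∫ s in (t - b)..(t + b), q s := by linarith
          exact mul_lt_mul_of_pos_right hab this
  -- ordering lemmas
  have hle : ∀ t c : ℝ, 0 ≤ c → c * (∫ s in (t - c)..(t + c), q s) ≤ 2 → c ≤ d t := by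
    intro t c hc h
    by_contra hlt
    push_neg at hlt
    have h2 := hmono t (d t) c (le_of_lt (hd t).1) hlt
    rw [← (hd t).2] at h2
    linarith
  have hge : ∀ t c : ℝ, 0 ≤ c → 2 ≤ c * (∫ s in (t - c)..(t + c), q s) → d t ≤ c := by
    intro t c hc h
    by_contra hlt
    push_neg at hlt
    have h2 := hmono t c (d t) hc hlt
    rw [← (hd t).2] at h2
    linarith
  -- part 2
  have hpart2 : ∀ x, 0 < d x ∧ d x ≤ 1 := by
    intro x
    refine ⟨(hd x).1, ?_⟩
    have hdx := (hd x).1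
    have hI : 2 * d x ≤ ∫ s in (x - d x)..(x + d x), q s := by
      have := hlow (x - d x) (x + d x) (by linarith)
      linarith
    have h2 : 2 * (d x * d x) ≤ 2 := by
      have := mul_le_mul_of_nonneg_left hI (le_of_lt hdx)
      rw [← (hd x).2] at this
      nlinarith
    nlinarith
  -- part 3
  have hpart3 : ∀ ε : ℝ, ε ∈ Set.Icc (0 : ℝ) 1 → ∀ x : ℝ,
      ∀ t ∈ Set.Icc (x - ε * d x) (x + ε * d x),
        (1 - ε) * d x ≤ d t ∧ d t ≤ (1 + ε) * d x := by
    intro ε ⟨hε0, hε1⟩ x t ⟨ht1, ht2⟩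
    have hdx := (hd x).1
    have hIx : (∫ s in (x - d x)..(x + d x), q s) = 2 / d x := by
      field_simp
      linarith [(hd x).2]
    constructor
    · -- lower bound: c = (1-ε) d x
      set c := (1 - ε) * d x with hc
      have hc0 : 0 ≤ c := mul_nonneg (by linarith) (le_of_lt hdx)
      refine hle t c hc0 ?_
      have hIsub : (∫ s in (t - c)..(t + c), q s) ≤ ∫ s in (x - d x)..(x + d x), q s :=
        hsub _ _ _ _ (by nlinarith) (by linarith) (by nlinarith)
      have : c * (∫ s in (t - c)..(t + c), q s) ≤ c * (2 / d x) := by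
        rw [← hIx]
        exact mul_le_mul_of_nonneg_left hIsub hc0
      have hcd : c * (2 / d x) = 2 * (1 - ε) := by
        field_simp [hc]
        ring
      rw [hcd] at this
      linarith
    · -- upper bound: c = (1+ε) d x
      set c := (1 + ε) * d x with hc
      have hc0 : 0 ≤ c := mul_nonneg (by linarith) (le_of_lt hdx)
      refine hge t c hc0 ?_
      have hIsub : (∫ s in (x - d x)..(x + d x), q s) ≤ ∫ s in (t - c)..(t + c), q s :=
        hsub _ _ _ _ (by nlinarith) (by linarith) (by nlinarith)
      have : c * (2 / d x) ≤ c * (∫ s in (t - c)..(t + c), q s) := by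
        rw [← hIx]
        exact mul_le_mul_of_nonneg_left hIsub hc0
      have hcd : c * (2 / d x) = 2 * (1 + ε) := by
        field_simp [hc]
        ring
      rw [hcd] at this
      linarith
  refine ⟨?_, hpart2, hpart3⟩
  -- continuity
  rw [Metric.continuous_iff]
  intro x η hη
  have hdx := (hd x).1
  set ε : ℝ := min 1 (η / (2 * d x)) with hεdef
  have hε0 : 0 < ε := lt_min one_pos (div_pos hη (by linarith))
  have hε1 : ε ≤ 1 := min_le_left _ _
  refine ⟨ε * d x, mul_pos hε0 hdx, ?_⟩
  intro t ht
  have ht' : t ∈ Set.Icc (x - ε * d x) (x + ε * d x) := by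
    rw [Real.dist_eq] at ht
    constructor <;> [skip; skip] <;> cases abs_lt.mp ht with
    | intro h1 h2 => first | linarith | linarith
  have h3 := hpart3 ε ⟨le_of_lt hε0, hε1⟩ x t ht'
  rw [Real.dist_eq]
  have hεd : ε * d x ≤ η / 2 := by
    have : ε ≤ η / (2 * d x) := min_le_right _ _
    calc ε * d x ≤ (η / (2 * d x)) * d x := mul_le_mul_of_nonneg_right this (le_of_lt hdx)
      _ = η / 2 := by field_simp
  rw [abs_lt]
  constructor <;> nlinarith [h3.1, h3.2]

end
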